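/- Let $A$ be a Noetherian ring, $I$ an ideal of $A$, and $M$ an $A$-module (not necessarily finitely generated). Let $\Gamma_I(M) = \{m \in M \mid I^s m = 0 \text{ for some } s \geq 0\}$ be the $I$-torsion submodule of $M$. Then the set of associated primes of the quotient $M/\Gamma_I(M)$ equals $\{P \in \operatorname{Ass}_A M \mid P \not\supseteq I\}$. -/

import Mathlib

/-!
An associated prime of `M ⧸ Γ_I(M)` is a prime of the form `P = Γ_I(M) : x`. Since `P` is finitely
generated, a single power `I ^ s` satisfies `I ^ s P x = 0`. This rules out `I ≤ P` (it would put
`x` in `Γ_I(M)`), and then any `b ∈ I ^ s \ P` gives `P = ann (b • x)`. Conversely, if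
`P = ann x` does not contain `I`, multiplying by an element of `I ^ s \ P` shows that
`r • x ∈ Γ_I(M)` forces `r ∈ P`, so `P = Γ_I(M) : x`.
-/

/-- The `I`-torsion submodule `Γ_I(M) = { x ∈ M ∣ Iˢ x = 0 for some s ≥ 0 }`. -/
def torsionByIdeal {A : Type*} [CommRing A] (I : Ideal A)
    (M : Type*) [AddCommGroup M] [Module A M] : Submodule A M where
  carrier := {x | ∃ s : ℕ, ∀ a ∈ I ^ s, a • x = 0}
  zero_mem' := ⟨0, fun a _ => smul_zero a⟩
  add_mem' := by
    rintro x y ⟨s, hs⟩ ⟨t, ht⟩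
    refine ⟨max s t, fun a ha => ?_⟩
    rw [smul_add, hs a (Ideal.pow_le_pow_right (le_max_left s t) ha),
      ht a (Ideal.pow_le_pow_right (le_max_right s t) ha), add_zero]
  smul_mem' := by
    rintro r x ⟨s, hs⟩
    exact ⟨s, fun a ha => by rw [smul_comm, hs a ha, smul_zero]⟩

section

open Submodule

variable {A : Type*} [CommRing A] {M : Type*} [AddCommGroup M] [Module A M]

theorem Submodule.colon_bot_mkQ (N : Submodule A M) (x : M) :
    (⊥ : Submodule A (M ⧸ N)).colon {N.mkQ x} = N.colon {x} := by
  ext r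
  rw [mem_colon_singleton, mem_colon_singleton, mem_bot, ← map_smul, mkQ_apply,
    Quotient.mk_eq_zero]

theorem isAssociatedPrime_quotient_iff {N : Submodule A M} {P : Ideal A} :
    IsAssociatedPrime P (M ⧸ N) ↔ N.IsAssociatedPrime P := by
  rw [IsAssociatedPrime, Submodule.isAssociatedPrime_def, Submodule.isAssociatedPrime_def,
    N.mkQ_surjective.exists]
  simp only [colon_bot_mkQ]

variable {I P : Ideal A} {x : M}

theorem mem_torsionByIdeal_iff :
    x ∈ torsionByIdeal I M ↔ ∃ s : ℕ, I ^ s ≤ (⊥ : Submodule A M).colon {x} := by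
  simp only [SetLike.le_def, mem_colon_singleton, mem_bot]
  rfl

theorem colon_torsionByIdeal_le (hP : P.IsPrime) (hIP : ¬ I ≤ P)
    (hx : (⊥ : Submodule A M).colon {x} ≤ P) : (torsionByIdeal I M).colon {x} ≤ P := by
  intro r hr
  obtain ⟨s, hs⟩ := mem_torsionByIdeal_iff.mp (mem_colon_singleton.mp hr)
  obtain ⟨b, hbI, hbP⟩ := SetLike.not_le_iff_exists.mp (mt hP.le_of_pow_le hIP)
  have hbr : b * r ∈ P := hx <| by
    rw [mem_colon_singleton, mul_smul]
    exact mem_colon_singleton.mp (hs hbI)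
  exact (hP.mem_or_mem hbr).resolve_left hbP

theorem exists_pow_mul_le_colon_bot {J : Ideal A} (hJ : J.FG)
    (h : J ≤ (torsionByIdeal I M).colon {x}) :
    ∃ s : ℕ, I ^ s * J ≤ (⊥ : Submodule A M).colon {x} := by
  induction J, hJ using Submodule.fg_induction with
  | singleton a =>
    obtain ⟨s, hs⟩ := mem_torsionByIdeal_iff.mp
      (mem_colon_singleton.mp (h (mem_span_singleton_self a)))
    refine ⟨s, Ideal.mul_le.mpr fun b hb c hc => ?_⟩
    obtain ⟨d, rfl⟩ := Ideal.mem_span_singleton'.mp hc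
    have hba : b • a • x = 0 := mem_colon_singleton.mp (hs hb)
    rw [mem_colon_singleton, mem_bot, mul_smul, mul_smul, smul_comm b d, hba, smul_zero]
  | sup J₁ J₂ _ _ ih₁ ih₂ =>
    obtain ⟨s₁, hs₁⟩ := ih₁ (le_sup_left.trans h)
    obtain ⟨s₂, hs₂⟩ := ih₂ (le_sup_right.trans h)
    refine ⟨max s₁ s₂, mul_sup (I ^ max s₁ s₂) J₁ J₂ ▸ sup_le ?_ ?_⟩
    · exact (Ideal.mul_mono_left (Ideal.pow_le_pow_right (le_max_left _ _))).trans hs₁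
    · exact (Ideal.mul_mono_left (Ideal.pow_le_pow_right (le_max_right _ _))).trans hs₂

variable [IsNoetherianRing A]

theorem mem_torsionByIdeal_of_le_colon (h : I ≤ (torsionByIdeal I M).colon {x}) :
    x ∈ torsionByIdeal I M := by
  obtain ⟨s, hs⟩ := exists_pow_mul_le_colon_bot (IsNoetherian.noetherian I) h
  exact mem_torsionByIdeal_iff.mpr ⟨s + 1, pow_succ I s ▸ hs⟩

theorem not_le_of_eq_colon_torsionByIdeal (hP : P ≠ ⊤)
    (hPx : P = (torsionByIdeal I M).colon {x}) : ¬ I ≤ P := fun hIP => hP <| by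
  rw [Ideal.eq_top_iff_one, hPx, mem_colon_singleton, one_smul]
  exact mem_torsionByIdeal_of_le_colon (hPx ▸ hIP)

theorem exists_eq_colon_bot_of_eq_colon_torsionByIdeal (hP : P.IsPrime) (hIP : ¬ I ≤ P)
    (hPx : P = (torsionByIdeal I M).colon {x}) : ∃ y : M, P = (⊥ : Submodule A M).colon {y} := by
  obtain ⟨s, hs⟩ := exists_pow_mul_le_colon_bot (IsNoetherian.noetherian P) hPx.le
  obtain ⟨b, hbI, hbP⟩ := SetLike.not_le_iff_exists.mp (mt hP.le_of_pow_le hIP)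
  refine ⟨b • x, le_antisymm (fun r hr => ?_) (fun r hr => ?_)⟩
  · rw [mem_colon_singleton, smul_smul, mul_comm]
    exact mem_colon_singleton.mp (hs (Ideal.mul_mem_mul hbI hr))
  · rw [mem_colon_singleton, smul_smul] at hr
    have hrb : r * b ∈ P := hPx ▸ colon_mono bot_le subset_rfl (mem_colon_singleton.mpr hr)
    exact (hP.mem_or_mem hrb).resolve_right hbP

end

/-- **Lemma.**  Let `A` be a Noetherian ring, `I` an ideal of `A` and `M` an `A`-module (not
necessarily finitely generated).  Then the associated primes of `M / Γ_I(M)` are exactly the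
associated primes of `M` that do not contain `I`. -/
theorem associatedPrimes_quotient_torsion
    {A : Type*} [CommRing A] [IsNoetherianRing A] (I : Ideal A)
    (M : Type*) [AddCommGroup M] [Module A M] :
    associatedPrimes A (M ⧸ torsionByIdeal I M) =
      {P ∈ associatedPrimes A M | ¬ I ≤ P} := by
  ext P
  rw [Set.mem_sep_iff, AssociatedPrimes.mem_iff, AssociatedPrimes.mem_iff,
    isAssociatedPrime_quotient_iff, Submodule.isAssociatedPrime_iff, isAssociatedPrime_iff]
  constructor
  · rintro ⟨hP, x, hPx⟩
    have hIP := not_le_of_eq_colon_torsionByIdeal hP.ne_top hPx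
    exact ⟨⟨hP, exists_eq_colon_bot_of_eq_colon_torsionByIdeal hP hIP hPx⟩, hIP⟩
  · rintro ⟨⟨hP, x, rfl⟩, hIP⟩
    exact ⟨hP, x, le_antisymm (Submodule.colon_mono bot_le subset_rfl)
      (colon_torsionByIdeal_le hP hIP le_rfl)⟩
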